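/- Let X be a metric space, S a family of closed subsets of X, and f : S → S a map which preserves left Hausdorff convergence, i.e. for every sequence (λ_i) in S and every μ ∈ S one has d⃗(λ_i, μ) → 0 if and only if d⃗(f(λ_i), f(μ)) → 0. Then f preserves inclusion in both directions: for all λ, μ ∈ S, λ ⊆ μ if and only if f(λ) ⊆ f(μ). -/

import Mathlib

open EMetric ENNReal Filter

/-- The left Hausdorff extended distance from `K` to `L`:
`d⃗(K, L) = ⨆ x ∈ K, infEdist x L`. -/
noncomputable def leftHausdorffEdist {X : Type*} [MetricSpace X] (K L : Set X) : ℝ≥0∞ :=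
  ⨆ x ∈ K, infEdist x L

/-! Only constant sequences are needed: `λ ⊆ μ` says exactly that `d⃗(λ, μ) = 0` (as `μ` is closed),
i.e. that the constant sequence `λ` converges to `μ` in the left Hausdorff sense, and `f`
transports this convergence in both directions. -/

section

variable {X : Type*} [MetricSpace X] {K L : Set X}

lemma leftHausdorffEdist_eq_zero_iff_subset_closure :
    leftHausdorffEdist K L = 0 ↔ K ⊆ closure L := by
  simp only [leftHausdorffEdist, iSup_eq_zero]
  exact forall₂_congr fun x _ => Metric.mem_closure_iff_infEDist_zero.symm

lemma IsClosed.leftHausdorffEdist_eq_zero_iff (hL : IsClosed L) :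
    leftHausdorffEdist K L = 0 ↔ K ⊆ L := by
  rw [leftHausdorffEdist_eq_zero_iff_subset_closure, hL.closure_eq]

lemma IsClosed.subset_iff_tendsto_const_leftHausdorffEdist (hL : IsClosed L) :
    K ⊆ L ↔ Tendsto (fun _ : ℕ => leftHausdorffEdist K L) atTop (nhds 0) := by
  rw [tendsto_const_nhds_iff, hL.leftHausdorffEdist_eq_zero_iff]

end

/-- If `S` is a family of closed subsets and `f : S → S` preserves left
Hausdorff convergence of sequences, then `f` preserves inclusion in both
directions: `λ ⊆ μ` iff `f λ ⊆ f μ`. -/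
theorem preserves_inclusion_of_preserves_convergence {X : Type*} [MetricSpace X]
    (S : Set (Set X)) (hS : ∀ A ∈ S, IsClosed A) (f : ↥S → ↥S)
    (hf : ∀ (l : ℕ → ↥S) (μ : ↥S),
      Tendsto (fun i => leftHausdorffEdist ((l i : Set X)) (μ : Set X)) atTop (nhds 0) ↔
        Tendsto (fun i => leftHausdorffEdist ((f (l i) : Set X)) ((f μ : Set X)))
          atTop (nhds 0)) :
    ∀ l μ : ↥S, (l : Set X) ⊆ (μ : Set X) ↔ ((f l : Set X)) ⊆ ((f μ : Set X)) := by
  intro l μ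
  rw [(hS μ μ.2).subset_iff_tendsto_const_leftHausdorffEdist,
    (hS (f μ) (f μ).2).subset_iff_tendsto_const_leftHausdorffEdist]
  exact hf (fun _ => l) μ
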